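/- arXiv:1305.5261 — 3 statements merged into one kernel-verified Lean document; each statement's English description precedes it below -/
import Mathlib

section
/- Let a ∈ C³(ℝ) have bounded derivatives up to order three, let T > 0, and let φ be a smooth function on [0,T]×ℝ that is compactly supported in x uniformly in t. Then the Virial-type identity ∫_0^T ∫_ℝ ( a'(x) (∂_xφ)² − (1/4) a'''(x) φ² ) dx dt = −[ ∫_ℝ ∂_tφ · Aφ dx ]_{t=0}^{t=T} − ∫_0^T ∫_ℝ □φ · Aφ dx dt holds, where [F(t)]_{t=0}^{t=T} = F(T) − F(0). -/
open MeasureTheory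

noncomputable section

/-- Partial derivative in the first (time) variable. -/
def pdt (φ : ℝ → ℝ → ℝ) (t x : ℝ) : ℝ := deriv (fun s => φ s x) t

/-- Partial derivative in the second (space) variable. -/
def pdx (φ : ℝ → ℝ → ℝ) (t x : ℝ) : ℝ := deriv (fun y => φ t y) x

/-- The flat 1+1 dimensional d'Alembertian `□ = −∂_t² + ∂_x²`. -/
def dAlembert (φ : ℝ → ℝ → ℝ) (t x : ℝ) : ℝ :=
  -(deriv (fun s => pdt φ s x) t) + deriv (fun y => pdx φ t y) x

/-- The multiplier `Aφ = a ∂_xφ + (1/2) a' φ` associated to a weight `a ∈ C³(ℝ)`. -/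
def Amult (a : ℝ → ℝ) (φ : ℝ → ℝ → ℝ) (t x : ℝ) : ℝ :=
  a x * pdx φ t x + (1 / 2) * deriv a x * φ t x

def D1 (ψ : ℝ × ℝ → ℝ) (p : ℝ × ℝ) : ℝ := fderiv ℝ ψ p (1, 0)
def D2 (ψ : ℝ × ℝ → ℝ) (p : ℝ × ℝ) : ℝ := fderiv ℝ ψ p (0, 1)

lemma hone : (1 : WithTop ℕ∞) ≤ ((⊤ : ℕ∞) : WithTop ℕ∞) := by
  exact_mod_cast (le_top : (1:ℕ∞) ≤ ⊤)

lemma hsucc : ((⊤ : ℕ∞) : WithTop ℕ∞) + 1 ≤ ((⊤ : ℕ∞) : WithTop ℕ∞) := by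
  exact_mod_cast (le_top : (⊤:ℕ∞) + 1 ≤ ⊤)

lemma contDiff_D1 {ψ : ℝ × ℝ → ℝ} (h : ContDiff ℝ (⊤ : ℕ∞) ψ) :
    ContDiff ℝ (⊤ : ℕ∞) (D1 ψ) :=
  (h.fderiv_right hsucc).clm_apply contDiff_const

lemma contDiff_D2 {ψ : ℝ × ℝ → ℝ} (h : ContDiff ℝ (⊤ : ℕ∞) ψ) :
    ContDiff ℝ (⊤ : ℕ∞) (D2 ψ) :=
  (h.fderiv_right hsucc).clm_apply contDiff_const

lemma hasDerivAt_fst {ψ : ℝ × ℝ → ℝ} (h : ContDiff ℝ (⊤ : ℕ∞) ψ) (t x : ℝ) :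
    HasDerivAt (fun s => ψ (s, x)) (D1 ψ (t, x)) t :=
  ((h.differentiable (lt_of_lt_of_le zero_lt_one hone).ne').differentiableAt.hasFDerivAt.comp_hasDerivAt t
    ((hasDerivAt_id t).prodMk (hasDerivAt_const t x)))

lemma hasDerivAt_snd {ψ : ℝ × ℝ → ℝ} (h : ContDiff ℝ (⊤ : ℕ∞) ψ) (t x : ℝ) :
    HasDerivAt (fun y => ψ (t, y)) (D2 ψ (t, x)) x :=
  ((h.differentiable (lt_of_lt_of_le zero_lt_one hone).ne').differentiableAt.hasFDerivAt.comp_hasDerivAt x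
    ((hasDerivAt_const x t).prodMk (hasDerivAt_id x)))

lemma schwarz {ψ : ℝ × ℝ → ℝ} (h : ContDiff ℝ (⊤ : ℕ∞) ψ) (p : ℝ × ℝ) :
    D1 (D2 ψ) p = D2 (D1 ψ) p := by
  have hdiff : ∀ q, HasFDerivAt ψ (fderiv ℝ ψ q) q := fun q =>
    ((h.differentiable (lt_of_lt_of_le zero_lt_one hone).ne') q).hasFDerivAt
  have hf' : DifferentiableAt ℝ (fderiv ℝ ψ) p :=
    ((h.fderiv_right hsucc).differentiable (lt_of_lt_of_le zero_lt_one hone).ne') p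
  have hsymm := second_derivative_symmetric hdiff hf'.hasFDerivAt (1,0) (0,1)
  have h1 : HasFDerivAt (D2 ψ)
      ((ContinuousLinearMap.apply ℝ ℝ ((0:ℝ),(1:ℝ))).comp (fderiv ℝ (fderiv ℝ ψ) p)) p :=
    (ContinuousLinearMap.apply ℝ ℝ ((0:ℝ),(1:ℝ))).hasFDerivAt.comp p hf'.hasFDerivAt
  have h2 : HasFDerivAt (D1 ψ)
      ((ContinuousLinearMap.apply ℝ ℝ ((1:ℝ),(0:ℝ))).comp (fderiv ℝ (fderiv ℝ ψ) p)) p :=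
    (ContinuousLinearMap.apply ℝ ℝ ((1:ℝ),(0:ℝ))).hasFDerivAt.comp p hf'.hasFDerivAt
  have e1 : D1 (D2 ψ) p = ((fderiv ℝ (fderiv ℝ ψ) p) (1,0)) (0,1) := by
    show (fderiv ℝ (D2 ψ) p) (1,0) = _
    rw [h1.fderiv]; rfl
  have e2 : D2 (D1 ψ) p = ((fderiv ℝ (fderiv ℝ ψ) p) (0,1)) (1,0) := by
    show (fderiv ℝ (D1 ψ) p) (0,1) = _
    rw [h2.fderiv]; rfl
  rw [e1, e2, hsymm]

lemma deriv_zero_of_far {f : ℝ → ℝ} {R x : ℝ} (hf : ∀ y, R ≤ |y| → f y = 0)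
    (hx : R + 1 ≤ |x|) : deriv f x = 0 := by
  have hev : f =ᶠ[nhds x] (fun _ => (0:ℝ)) := by
    filter_upwards [Metric.ball_mem_nhds x one_pos] with y hy
    apply hf
    have : |y - x| < 1 := by simpa [Real.dist_eq] using hy
    have := abs_sub_abs_le_abs_sub x y
    rw [abs_sub_comm] at this
    linarith
  rw [hev.deriv_eq, deriv_const]

lemma integrable_of_cont_vanish {f : ℝ → ℝ} (hf : Continuous f) {R : ℝ}
    (h0 : ∀ x, R ≤ |x| → f x = 0) : Integrable f := by
  apply hf.integrable_of_hasCompactSupport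
  apply HasCompactSupport.intro (isCompact_Icc (a := -|R|) (b := |R|))
  intro x hx
  apply h0
  have h' : ¬ |x| ≤ |R| := fun hle => hx (abs_le.1 hle)
  linarith [le_abs_self R, not_le.1 h']

lemma integral_deriv_zero {f : ℝ → ℝ} (hf : Differentiable ℝ f)
    (hc : Continuous (deriv f)) {R : ℝ} (h0 : ∀ x, R ≤ |x| → f x = 0) :
    ∫ x, deriv f x = 0 := by
  set M := |R| + 2 with hM
  have hRM : ∀ x, |R| ≤ |x| → f x = 0 := fun x hx => h0 x (le_trans (le_abs_self R) hx)
  have hd0 : ∀ x, x ∉ Set.Ioc (-M) M → deriv f x = 0 := by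
    intro x hx
    apply deriv_zero_of_far hRM
    simp only [Set.mem_Ioc, not_and_or, not_lt, not_le] at hx
    rcases hx with h | h <;> cases abs_cases x <;> linarith
  have h1 : ∫ x, deriv f x = ∫ x in Set.Ioc (-M) M, deriv f x :=
    (setIntegral_eq_integral_of_forall_compl_eq_zero hd0).symm
  have h2 : ∫ x in Set.Ioc (-M) M, deriv f x = ∫ x in (-M)..M, deriv f x := by
    rw [intervalIntegral.integral_of_le (by linarith [abs_nonneg R] : -M ≤ M)]
  have hM0 : (0:ℝ) ≤ M := by simp only [hM]; positivity
  have eM : f M = 0 := hRM M (by rw [abs_of_nonneg hM0]; linarith)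
  have eM' : f (-M) = 0 := hRM (-M) (by rw [abs_neg, abs_of_nonneg hM0]; linarith)
  rw [h1, h2, intervalIntegral.integral_deriv_eq_sub (fun x _ => hf x)
    (hc.intervalIntegrable _ _), eM, eM']
  ring

lemma integrable_prod_of_vanish {f : ℝ → ℝ → ℝ}
    (hf : Continuous (fun p : ℝ × ℝ => f p.1 p.2)) {R T : ℝ}
    (h0 : ∀ t x, R ≤ |x| → f t x = 0) :
    Integrable (fun p : ℝ × ℝ => f p.1 p.2)
      ((volume.restrict (Set.Ioc 0 T)).prod volume) := by
  have hmeas : (volume.restrict (Set.Ioc (0:ℝ) T)).prod volume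
      = (volume.prod volume).restrict ((Set.Ioc (0:ℝ) T) ×ˢ (Set.univ : Set ℝ)) := by
    rw [← Measure.prod_restrict, Measure.restrict_univ]
  obtain ⟨C, hC⟩ := (isCompact_Icc.prod isCompact_Icc :
      IsCompact ((Set.Icc (0:ℝ) T) ×ˢ (Set.Icc (-|R|) |R|))).exists_bound_of_continuousOn
      hf.continuousOn
  set C' := max C 0 with hC'
  have hbound : ∀ᵐ p ∂((volume.restrict (Set.Ioc (0:ℝ) T)).prod volume),
      ‖f p.1 p.2‖ ≤ C' * Set.indicator (Set.Icc (-|R|) |R|) (fun _ => (1:ℝ)) p.2 := by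
    rw [hmeas]
    filter_upwards [ae_restrict_mem (measurableSet_Ioc.prod MeasurableSet.univ)] with p hp
    obtain ⟨hp1, -⟩ := hp
    by_cases hx : p.2 ∈ Set.Icc (-|R|) |R|
    · rw [Set.indicator_of_mem hx]
      have := hC (p.1, p.2) ⟨⟨le_of_lt hp1.1, hp1.2⟩, hx⟩
      simp only [mul_one]
      exact le_trans this (le_max_left _ _)
    · rw [Set.indicator_of_notMem hx]
      have : f p.1 p.2 = 0 := by
        apply h0
        simp only [Set.mem_Icc, not_and_or, not_le] at hx
        rcases hx with h | h <;> cases abs_cases p.2 <;> linarith [le_abs_self R]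
      simp [this]
  have hint : Integrable (fun p : ℝ × ℝ =>
      C' * Set.indicator (Set.Icc (-|R|) |R|) (fun _ => (1:ℝ)) p.2)
      ((volume.restrict (Set.Ioc 0 T)).prod volume) := by
    have h1 : Integrable (fun _ : ℝ => C') (volume.restrict (Set.Ioc (0:ℝ) T)) := by
      rw [← IntegrableOn]
      exact integrableOn_const (by simp [Real.volume_Ioc])
    have h2 : Integrable (fun x : ℝ => Set.indicator (Set.Icc (-|R|) |R|) (fun _ => (1:ℝ)) x)
        volume := by
      rw [integrable_indicator_iff measurableSet_Icc]
      exact integrableOn_const (by simp [Real.volume_Icc])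
    exact h1.mul_prod h2
  exact hint.mono' hf.aestronglyMeasurable hbound

lemma D1_zero_of_line {ψ : ℝ × ℝ → ℝ} (h : ContDiff ℝ (⊤ : ℕ∞) ψ) {x : ℝ}
    (hx : ∀ s, ψ (s, x) = 0) (t : ℝ) : D1 ψ (t, x) = 0 := by
  rw [← (hasDerivAt_fst h t x).deriv]
  have : (fun s => ψ (s, x)) = fun _ => (0:ℝ) := funext hx
  rw [this, deriv_const]

lemma D2_zero_of_far {ψ : ℝ × ℝ → ℝ} (h : ContDiff ℝ (⊤ : ℕ∞) ψ) {R t x : ℝ}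
    (h0 : ∀ y, R ≤ |y| → ψ (t, y) = 0) (hx : R + 1 ≤ |x|) : D2 ψ (t, x) = 0 := by
  rw [← (hasDerivAt_snd h t x).deriv]
  exact deriv_zero_of_far h0 hx

lemma aux_a {a : ℝ → ℝ} (ha : ContDiff ℝ 3 a) :
    Differentiable ℝ a ∧ Differentiable ℝ (deriv a) ∧ Differentiable ℝ (deriv (deriv a))
      ∧ Continuous (deriv (deriv (deriv a))) := by
  rw [show (3 : WithTop ℕ∞) = 2 + 1 by norm_num, contDiff_succ_iff_deriv] at ha
  obtain ⟨h1, -, ha⟩ := ha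
  rw [show (2 : WithTop ℕ∞) = 1 + 1 by norm_num, contDiff_succ_iff_deriv] at ha
  obtain ⟨h2, -, ha⟩ := ha
  rw [contDiff_one_iff_deriv] at ha
  exact ⟨h1, h2, ha.1, ha.2⟩

/-- momentum density -/
def Fv (a : ℝ → ℝ) (ψ : ℝ × ℝ → ℝ) (p : ℝ × ℝ) : ℝ :=
  D1 ψ p * (a p.2 * D2 ψ p + 1 / 2 * deriv a p.2 * ψ p)

/-- its time derivative -/
def Gv (a : ℝ → ℝ) (ψ : ℝ × ℝ → ℝ) (p : ℝ × ℝ) : ℝ :=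
  D1 (D1 ψ) p * (a p.2 * D2 ψ p + 1 / 2 * deriv a p.2 * ψ p)
  + D1 ψ p * (a p.2 * D1 (D2 ψ) p + 1 / 2 * deriv a p.2 * D1 ψ p)

/-- flux -/
def Pv (a : ℝ → ℝ) (ψ : ℝ × ℝ → ℝ) (p : ℝ × ℝ) : ℝ :=
  1 / 2 * a p.2 * (D2 ψ p) ^ 2 + 1 / 2 * deriv a p.2 * ψ p * D2 ψ p
  - 1 / 4 * deriv (deriv a) p.2 * (ψ p) ^ 2 + 1 / 2 * a p.2 * (D1 ψ p) ^ 2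

/-- x-derivative of the flux -/
def Hv (a : ℝ → ℝ) (ψ : ℝ × ℝ → ℝ) (p : ℝ × ℝ) : ℝ :=
  (1 / 2 * deriv a p.2 * (D2 ψ p) ^ 2 + 1 / 2 * a p.2 * (2 * D2 ψ p * D2 (D2 ψ) p))
  + ((1 / 2 * deriv (deriv a) p.2 * ψ p + 1 / 2 * deriv a p.2 * D2 ψ p) * D2 ψ p
      + 1 / 2 * deriv a p.2 * ψ p * D2 (D2 ψ) p)
  - (1 / 4 * deriv (deriv (deriv a)) p.2 * (ψ p) ^ 2
      + 1 / 4 * deriv (deriv a) p.2 * (2 * ψ p * D2 ψ p))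
  + (1 / 2 * deriv a p.2 * (D1 ψ p) ^ 2 + 1 / 2 * a p.2 * (2 * D1 ψ p * D2 (D1 ψ) p))

/-- d'Alembertian times multiplier, in D-form -/
def Qv (a : ℝ → ℝ) (ψ : ℝ × ℝ → ℝ) (p : ℝ × ℝ) : ℝ :=
  (-(D1 (D1 ψ) p) + D2 (D2 ψ) p) * (a p.2 * D2 ψ p + 1 / 2 * deriv a p.2 * ψ p)

/-- virial integrand, in D-form -/
def Lv (a : ℝ → ℝ) (ψ : ℝ × ℝ → ℝ) (p : ℝ × ℝ) : ℝ :=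
  deriv a p.2 * (D2 ψ p) ^ 2 - 1 / 4 * deriv (deriv (deriv a)) p.2 * (ψ p) ^ 2

lemma key_pointwise {a : ℝ → ℝ} {ψ : ℝ × ℝ → ℝ} (hψ : ContDiff ℝ (⊤ : ℕ∞) ψ) (p : ℝ × ℝ) :
    Lv a ψ p = -(Gv a ψ p) - Qv a ψ p + Hv a ψ p := by
  have hs := schwarz hψ p
  unfold Lv Gv Qv Hv
  rw [hs]
  ring

lemma hasDerivAt_Fv {a : ℝ → ℝ} {ψ : ℝ × ℝ → ℝ} (hψ : ContDiff ℝ (⊤ : ℕ∞) ψ) (t x : ℝ) :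
    HasDerivAt (fun s => Fv a ψ (s, x)) (Gv a ψ (t, x)) t := by
  have h1 := hasDerivAt_fst (contDiff_D1 hψ) t x
  have h2 := (hasDerivAt_fst (contDiff_D2 hψ) t x).const_mul (a x)
  have h3 := (hasDerivAt_fst hψ t x).const_mul (1 / 2 * deriv a x)
  have h := h1.mul (h2.add h3)
  have e : Gv a ψ (t, x) =
      D1 (D1 ψ) (t, x) * (a x * D2 ψ (t, x) + 1 / 2 * deriv a x * ψ (t, x))
      + D1 ψ (t, x) * (a x * D1 (D2 ψ) (t, x) + 1 / 2 * deriv a x * D1 ψ (t, x)) := by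
    unfold Gv; ring
  rw [e]; exact h

lemma hasDerivAt_Pv {a : ℝ → ℝ} {ψ : ℝ × ℝ → ℝ}
    (hda : Differentiable ℝ a) (hda1 : Differentiable ℝ (deriv a))
    (hda2 : Differentiable ℝ (deriv (deriv a)))
    (hψ : ContDiff ℝ (⊤ : ℕ∞) ψ) (t x : ℝ) :
    HasDerivAt (fun y => Pv a ψ (t, y)) (Hv a ψ (t, x)) x := by
  have ha0 : HasDerivAt a (deriv a x) x := (hda x).hasDerivAt
  have ha1 : HasDerivAt (deriv a) (deriv (deriv a) x) x := (hda1 x).hasDerivAt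
  have ha2 : HasDerivAt (deriv (deriv a)) (deriv (deriv (deriv a)) x) x := (hda2 x).hasDerivAt
  have hp := hasDerivAt_snd hψ t x
  have hpx := hasDerivAt_snd (contDiff_D2 hψ) t x
  have hpt := hasDerivAt_snd (contDiff_D1 hψ) t x
  have t1 := (ha0.const_mul (1/2 : ℝ)).mul (hpx.pow 2)
  have t2 := ((ha1.const_mul (1/2 : ℝ)).mul hp).mul hpx
  have t3 := (ha2.const_mul (1/4 : ℝ)).mul (hp.pow 2)
  have t4 := (ha0.const_mul (1/2 : ℝ)).mul (hpt.pow 2)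
  have h := ((t1.add t2).sub t3).add t4
  refine h.congr_deriv ?_
  unfold Hv
  simp only [Pi.pow_apply, Pi.mul_apply]
  ring

/-- Virial-type identity.  For `a ∈ C³(ℝ)` with bounded derivatives up to
order three, `T > 0`, and `φ` smooth on `[0,T]×ℝ` compactly supported in `x` uniformly in `t`:
`∫_0^T ∫_ℝ ( a' (∂_xφ)² − (1/4) a''' φ² ) dx dt
  = −[ ∫_ℝ ∂_tφ · Aφ dx ]_{t=0}^{t=T} − ∫_0^T ∫_ℝ □φ · Aφ dx dt`. -/
theorem virial_identity
    (a : ℝ → ℝ) (ha : ContDiff ℝ 3 a)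
    (hbd : ∀ k : ℕ, k ≤ 3 → ∃ M, ∀ x, |iteratedDeriv k a x| ≤ M)
    (T : ℝ) (hT : 0 < T)
    (φ : ℝ → ℝ → ℝ) (hφ : ContDiff ℝ (⊤ : ℕ∞) (fun p : ℝ × ℝ => φ p.1 p.2))
    (hsupp : ∃ R, ∀ t x : ℝ, R ≤ |x| → φ t x = 0) :
    (∫ t in Set.Ioc (0 : ℝ) T, ∫ x : ℝ,
        (deriv a x * (pdx φ t x) ^ 2 - (1 / 4) * iteratedDeriv 3 a x * (φ t x) ^ 2))
      = -((∫ x : ℝ, pdt φ T x * Amult a φ T x) - ∫ x : ℝ, pdt φ 0 x * Amult a φ 0 x)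
        - ∫ t in Set.Ioc (0 : ℝ) T, ∫ x : ℝ, dAlembert φ t x * Amult a φ t x := by
  classical
  set Φ : ℝ × ℝ → ℝ := fun p => φ p.1 p.2 with hΦdef
  have hΦ : ContDiff ℝ (⊤ : ℕ∞) Φ := hφ.of_le (by simp)
  obtain ⟨hda, hda1, hda2, hca3⟩ := aux_a ha
  have hca : Continuous a := hda.continuous
  have hca1 : Continuous (deriv a) := hda1.continuous
  have hca2 : Continuous (deriv (deriv a)) := hda2.continuous
  obtain ⟨R₀, hR₀⟩ := hsupp
  set R : ℝ := |R₀| with hRdef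
  have v0 : ∀ t x, R ≤ |x| → Φ (t, x) = 0 := fun t x hx =>
    hR₀ t x (le_trans (le_abs_self R₀) hx)
  -- vanishing of all partial derivatives far out
  have v1 : ∀ t x, R ≤ |x| → D1 Φ (t, x) = 0 := fun t x hx =>
    D1_zero_of_line hΦ (fun s => v0 s x hx) t
  have v2 : ∀ t x, R + 1 ≤ |x| → D2 Φ (t, x) = 0 := fun t x hx =>
    D2_zero_of_far hΦ (fun y hy => v0 t y hy) hx
  have v11 : ∀ t x, R ≤ |x| → D1 (D1 Φ) (t, x) = 0 := fun t x hx =>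
    D1_zero_of_line (contDiff_D1 hΦ) (fun s => v1 s x hx) t
  have v12 : ∀ t x, R + 1 ≤ |x| → D1 (D2 Φ) (t, x) = 0 := fun t x hx =>
    D1_zero_of_line (contDiff_D2 hΦ) (fun s => v2 s x hx) t
  have v21 : ∀ t x, R + 1 ≤ |x| → D2 (D1 Φ) (t, x) = 0 := fun t x hx =>
    D2_zero_of_far (contDiff_D1 hΦ) (fun y hy => v1 t y hy) hx
  have v22 : ∀ t x, R + 2 ≤ |x| → D2 (D2 Φ) (t, x) = 0 := by
    intro t x hx
    exact D2_zero_of_far (contDiff_D2 hΦ) (fun y hy => v2 t y hy) (by linarith)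
  -- vanishing of the composite quantities (for R + 2 ≤ |x|)
  have hR2 : ∀ x : ℝ, R + 2 ≤ |x| → R ≤ |x| ∧ R + 1 ≤ |x| := fun x hx =>
    ⟨by linarith, by linarith⟩
  have vF : ∀ t x, R + 2 ≤ |x| → Fv a Φ (t, x) = 0 := by
    intro t x hx; obtain ⟨h0, h1⟩ := hR2 x hx
    simp [Fv, v1 t x h0]
  have vG : ∀ t x, R + 2 ≤ |x| → Gv a Φ (t, x) = 0 := by
    intro t x hx; obtain ⟨h0, h1⟩ := hR2 x hx
    simp [Gv, v1 t x h0, v11 t x h0]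
  have vH : ∀ t x, R + 2 ≤ |x| → Hv a Φ (t, x) = 0 := by
    intro t x hx; obtain ⟨h0, h1⟩ := hR2 x hx
    simp only [Hv, v0 t x h0, v1 t x h0, v2 t x h1, v21 t x h1, v22 t x hx]
    ring
  have vQ : ∀ t x, R + 2 ≤ |x| → Qv a Φ (t, x) = 0 := by
    intro t x hx; obtain ⟨h0, h1⟩ := hR2 x hx
    simp only [Qv, v0 t x h0, v2 t x h1]
    ring
  have vL : ∀ t x, R + 2 ≤ |x| → Lv a Φ (t, x) = 0 := by
    intro t x hx; obtain ⟨h0, h1⟩ := hR2 x hx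
    simp only [Lv, v0 t x h0, v2 t x h1]
    ring
  have vP : ∀ t x, R + 2 ≤ |x| → Pv a Φ (t, x) = 0 := by
    intro t x hx; obtain ⟨h0, h1⟩ := hR2 x hx
    simp only [Pv, v0 t x h0, v1 t x h0, v2 t x h1]
    ring
  -- continuity
  have cd0 : Continuous Φ := hΦ.continuous
  have cd1 : Continuous (D1 Φ) := (contDiff_D1 hΦ).continuous
  have cd2 : Continuous (D2 Φ) := (contDiff_D2 hΦ).continuous
  have cd11 : Continuous (D1 (D1 Φ)) := (contDiff_D1 (contDiff_D1 hΦ)).continuous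
  have cd12 : Continuous (D1 (D2 Φ)) := (contDiff_D1 (contDiff_D2 hΦ)).continuous
  have cd21 : Continuous (D2 (D1 Φ)) := (contDiff_D2 (contDiff_D1 hΦ)).continuous
  have cd22 : Continuous (D2 (D2 Φ)) := (contDiff_D2 (contDiff_D2 hΦ)).continuous
  have cF : Continuous (Fv a Φ) := by unfold Fv; fun_prop
  have cG : Continuous (Gv a Φ) := by unfold Gv; fun_prop
  have cH : Continuous (Hv a Φ) := by unfold Hv; fun_prop
  have cQ : Continuous (Qv a Φ) := by unfold Qv; fun_prop
  have cL : Continuous (Lv a Φ) := by unfold Lv; fun_prop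
  -- rewrite the goal in D-form
  have ept : ∀ t x, pdt φ t x = D1 Φ (t, x) := fun t x => (hasDerivAt_fst hΦ t x).deriv
  have epx : ∀ t x, pdx φ t x = D2 Φ (t, x) := fun t x => (hasDerivAt_snd hΦ t x).deriv
  have eptt : ∀ t x, deriv (fun s => pdt φ s x) t = D1 (D1 Φ) (t, x) := by
    intro t x
    have e : (fun s => pdt φ s x) = fun s => D1 Φ (s, x) := funext fun s => ept s x
    rw [e]; exact (hasDerivAt_fst (contDiff_D1 hΦ) t x).deriv
  have epxx : ∀ t x, deriv (fun y => pdx φ t y) x = D2 (D2 Φ) (t, x) := by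
    intro t x
    have e : (fun y => pdx φ t y) = fun y => D2 Φ (t, y) := funext fun y => epx t y
    rw [e]; exact (hasDerivAt_snd (contDiff_D2 hΦ) t x).deriv
  have e3 : iteratedDeriv 3 a = deriv (deriv (deriv a)) := by
    rw [show (3:ℕ) = 2 + 1 from rfl, iteratedDeriv_succ,
        show (2:ℕ) = 1 + 1 from rfl, iteratedDeriv_succ, iteratedDeriv_one]
  have eAm : ∀ t x, Amult a φ t x = a x * D2 Φ (t, x) + 1 / 2 * deriv a x * Φ (t, x) := by
    intro t x; rw [Amult, epx]
  have eL : ∀ t x, deriv a x * (pdx φ t x) ^ 2 - (1 / 4) * iteratedDeriv 3 a x * (φ t x) ^ 2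
      = Lv a Φ (t, x) := by
    intro t x; rw [Lv, epx, e3]
  have eF : ∀ t x, pdt φ t x * Amult a φ t x = Fv a Φ (t, x) := by
    intro t x; rw [Fv, ept, eAm]
  have eQ : ∀ t x, dAlembert φ t x * Amult a φ t x = Qv a Φ (t, x) := by
    intro t x; rw [Qv, dAlembert, eptt, epxx, eAm]
  simp only [eL, eF, eQ]
  -- integrability
  have cslice : ∀ (f : ℝ × ℝ → ℝ), Continuous f → ∀ t : ℝ, Continuous (fun x => f (t, x)) :=
    fun f hf t => hf.comp (continuous_const.prodMk continuous_id)
  have iGs : ∀ t, Integrable (fun x => Gv a Φ (t, x)) := fun t =>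
    integrable_of_cont_vanish (cslice _ cG t) (vG t)
  have iHs : ∀ t, Integrable (fun x => Hv a Φ (t, x)) := fun t =>
    integrable_of_cont_vanish (cslice _ cH t) (vH t)
  have iQs : ∀ t, Integrable (fun x => Qv a Φ (t, x)) := fun t =>
    integrable_of_cont_vanish (cslice _ cQ t) (vQ t)
  have iFs : ∀ t, Integrable (fun x => Fv a Φ (t, x)) := fun t =>
    integrable_of_cont_vanish (cslice _ cF t) (vF t)
  have iG : Integrable (Gv a Φ) ((volume.restrict (Set.Ioc 0 T)).prod volume) :=
    integrable_prod_of_vanish (f := fun t x => Gv a Φ (t, x)) (by exact cG) (fun t x => vG t x)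
  have iQ : Integrable (Qv a Φ) ((volume.restrict (Set.Ioc 0 T)).prod volume) :=
    integrable_prod_of_vanish (f := fun t x => Qv a Φ (t, x)) (by exact cQ) (fun t x => vQ t x)
  -- step 1 : the flux integrates to zero in x
  have step1 : ∀ t : ℝ, ∫ x, Hv a Φ (t, x) = 0 := by
    intro t
    have hdiffP : Differentiable ℝ (fun y => Pv a Φ (t, y)) := fun y =>
      (hasDerivAt_Pv hda hda1 hda2 hΦ t y).differentiableAt
    have hderivP : deriv (fun y => Pv a Φ (t, y)) = fun x => Hv a Φ (t, x) :=
      funext fun x => (hasDerivAt_Pv hda hda1 hda2 hΦ t x).deriv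
    have := integral_deriv_zero hdiffP (by rw [hderivP]; exact cslice _ cH t) (vP t)
    rw [hderivP] at this
    exact this
  -- step 2 : pointwise-in-t evaluation of the inner integral
  have step2 : ∀ t : ℝ, ∫ x, Lv a Φ (t, x)
      = -(∫ x, Gv a Φ (t, x)) - ∫ x, Qv a Φ (t, x) := by
    intro t
    have e : (fun x => Lv a Φ (t, x))
        = fun x => (-(Gv a Φ (t, x)) - Qv a Φ (t, x)) + Hv a Φ (t, x) :=
      funext fun x => key_pointwise hΦ (t, x)
    have A : Integrable (fun x => -(Gv a Φ (t, x)) - Qv a Φ (t, x)) := ((iGs t).neg).sub (iQs t)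
    have B : Integrable (fun x => -(Gv a Φ (t, x))) := (iGs t).neg
    rw [e, integral_add A (iHs t), step1 t, add_zero, integral_sub B (iQs t), integral_neg]
  simp only [step2]
  -- step 3 : outer linearity
  have iGt : Integrable (fun t => ∫ x, Gv a Φ (t, x)) (volume.restrict (Set.Ioc 0 T)) :=
    iG.integral_prod_left
  have iQt : Integrable (fun t => ∫ x, Qv a Φ (t, x)) (volume.restrict (Set.Ioc 0 T)) :=
    iQ.integral_prod_left
  have iGt' : Integrable (fun t => -∫ x, Gv a Φ (t, x)) (volume.restrict (Set.Ioc 0 T)) := iGt.neg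
  rw [integral_sub iGt' iQt, integral_neg]
  -- step 4 : FTC in time
  have swap : ∫ t in Set.Ioc (0:ℝ) T, ∫ x, Gv a Φ (t, x)
      = ∫ x, ∫ t in Set.Ioc (0:ℝ) T, Gv a Φ (t, x) :=
    integral_integral_swap (f := fun t x => Gv a Φ (t, x)) iG
  have inner : ∀ x : ℝ, ∫ t in Set.Ioc (0:ℝ) T, Gv a Φ (t, x)
      = Fv a Φ (T, x) - Fv a Φ (0, x) := by
    intro x
    have e : (fun t => Gv a Φ (t, x)) = deriv (fun s => Fv a Φ (s, x)) :=
      funext fun t => ((hasDerivAt_Fv hΦ t x).deriv).symm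
    rw [← intervalIntegral.integral_of_le hT.le]
    calc ∫ t in (0:ℝ)..T, Gv a Φ (t, x)
        = ∫ t in (0:ℝ)..T, deriv (fun s => Fv a Φ (s, x)) t := by rw [e]
      _ = Fv a Φ (T, x) - Fv a Φ (0, x) := by
          apply intervalIntegral.integral_deriv_eq_sub
            (fun t _ => (hasDerivAt_Fv hΦ t x).differentiableAt)
          rw [← e]
          exact (cG.comp (continuous_id.prodMk continuous_const)).intervalIntegrable _ _
  have step4 : ∫ t in Set.Ioc (0:ℝ) T, ∫ x, Gv a Φ (t, x)
      = (∫ x, Fv a Φ (T, x)) - ∫ x, Fv a Φ (0, x) := by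
    rw [swap]
    have e : (fun x => ∫ t in Set.Ioc (0:ℝ) T, Gv a Φ (t, x))
        = fun x => Fv a Φ (T, x) - Fv a Φ (0, x) := funext inner
    rw [e, integral_sub (iFs T) (iFs 0)]
  rw [step4]

end
end

section
/- Let a ∈ C³(ℝ) satisfy a'(x) > 0 for all x, and let λ > 0. Then for every φ ∈ C_c^∞(ℝ) one has the Hardy-type inequality ∫_ℝ ( a'''(x) − λ (a''(x))² / a'(x) ) φ(x)² dx ≤ λ^{-1} ∫_ℝ a'(x) (φ'(x))² dx. -/
open MeasureTheory

/-- Integral over ℝ of the derivative of a compactly supported C¹ function is zero. -/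
lemma integral_deriv_eq_zero_of_compact_support {f : ℝ → ℝ}
    (hf : ContDiff ℝ 1 f) (hfc : HasCompactSupport f) :
    (∫ x : ℝ, deriv f x) = 0 := by
  have hint : Integrable (deriv f) :=
    (hf.continuous_deriv le_rfl).integrable_of_hasCompactSupport hfc.deriv
  rw [← intervalIntegral.integral_Iic_add_Ioi (b := 0) hint.integrableOn hint.integrableOn,
    hfc.integral_Iic_deriv_eq hf 0, hfc.integral_Ioi_deriv_eq hf 0]
  ring

/-- Hardy-type inequality, eq. (funny_hardy) in the paper.
Let `a ∈ C³(ℝ)` satisfy `a' > 0` everywhere and let `λ > 0`.  Then for every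
`φ ∈ C_c^∞(ℝ)` one has
`∫ (a''' − λ (a'')²/a') φ² ≤ λ⁻¹ ∫ a' (φ')²`. -/
theorem hardy_type_inequality
    (a : ℝ → ℝ) (ha : ContDiff ℝ 3 a) (ha' : ∀ x, 0 < deriv a x)
    (lam : ℝ) (hlam : 0 < lam)
    (φ : ℝ → ℝ) (hφ : ContDiff ℝ (⊤ : ℕ∞) φ) (hφc : HasCompactSupport φ) :
    (∫ x : ℝ, (iteratedDeriv 3 a x - lam * (iteratedDeriv 2 a x) ^ 2 / deriv a x) * φ x ^ 2)
      ≤ lam⁻¹ * ∫ x : ℝ, deriv a x * (deriv φ x) ^ 2 := by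
  -- notation
  set A2 : ℝ → ℝ := iteratedDeriv 2 a with hA2
  set A3 : ℝ → ℝ := iteratedDeriv 3 a with hA3
  -- smoothness facts
  have ha1 : ContDiff ℝ 2 (deriv a) := by
    rw [show (3 : WithTop ℕ∞) = 2 + 1 by norm_num, contDiff_succ_iff_deriv] at ha
    exact ha.2.2
  have hA2c : ContDiff ℝ 1 A2 := by
    have : A2 = deriv (deriv a) := by
      rw [hA2, iteratedDeriv_succ, iteratedDeriv_one]
    rw [this]
    rw [show (2 : WithTop ℕ∞) = 1 + 1 by norm_num, contDiff_succ_iff_deriv] at ha1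
    exact ha1.2.2
  have hA3d : deriv A2 = A3 := (iteratedDeriv_succ (n := 2) (f := a)).symm
  have haC : Continuous (deriv a) := ha1.continuous
  have hA2C : Continuous A2 := hA2c.continuous
  have hA3C : Continuous A3 := by
    rw [← hA3d]; exact hA2c.continuous_deriv le_rfl
  have hφC : Continuous φ := hφ.continuous
  have hφd : Differentiable ℝ φ := hφ.differentiable (by simp)
  have hφ'C : Continuous (deriv φ) := hφ.continuous_deriv (by simp)
  -- compact supports
  have hφ2c : HasCompactSupport (fun x => φ x ^ 2) := by
    simpa [sq, Pi.mul_def] using hφc.mul_left (f := φ)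
  -- integration by parts: ∫ A3 φ² = - ∫ A2 (2 φ φ')
  have hw : ContDiff ℝ 1 (fun x => A2 x * φ x ^ 2) :=
    hA2c.mul ((hφ.of_le (by simp)).pow 2)
  have hwc : HasCompactSupport (fun x => A2 x * φ x ^ 2) := hφ2c.mul_left
  have hderiv : ∀ x, deriv (fun x => A2 x * φ x ^ 2) x
      = A3 x * φ x ^ 2 + A2 x * (2 * φ x * deriv φ x) := by
    intro x
    have h1 : HasDerivAt A2 (A3 x) x := by
      rw [← hA3d]
      exact (hA2c.differentiable one_ne_zero x).hasDerivAt
    have h2 : HasDerivAt (fun x => φ x ^ 2) (2 * φ x * deriv φ x) x := by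
      have := ((hφd x).hasDerivAt.pow 2)
      simpa [mul_comm, mul_assoc, Pi.pow_def] using this
    have := (h1.mul h2).deriv
    exact this
  have hparts : (∫ x : ℝ, A3 x * φ x ^ 2)
      = - ∫ x : ℝ, A2 x * (2 * φ x * deriv φ x) := by
    have h0 := integral_deriv_eq_zero_of_compact_support hw hwc
    rw [show (deriv fun x => A2 x * φ x ^ 2)
        = fun x => A3 x * φ x ^ 2 + A2 x * (2 * φ x * deriv φ x) from funext hderiv] at h0
    have hi1 : Integrable (fun x => A3 x * φ x ^ 2) :=
      (hA3C.mul (hφC.pow 2)).integrable_of_hasCompactSupport hφ2c.mul_left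
    have hi2 : Integrable (fun x => A2 x * (2 * φ x * deriv φ x)) := by
      apply (hA2C.mul ((continuous_const.mul hφC).mul hφ'C)).integrable_of_hasCompactSupport
      apply HasCompactSupport.mul_left
      apply HasCompactSupport.mul_right
      exact hφc.mul_left
    rw [integral_add hi1 hi2] at h0
    linarith
  -- integrability of the pieces of the LHS
  have hi3 : Integrable (fun x => A3 x * φ x ^ 2) :=
    (hA3C.mul (hφC.pow 2)).integrable_of_hasCompactSupport hφ2c.mul_left
  have hi4 : Integrable (fun x => lam * A2 x ^ 2 / deriv a x * φ x ^ 2) := by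
    apply Continuous.integrable_of_hasCompactSupport
    · exact ((continuous_const.mul (hA2C.pow 2)).div haC fun x => (ha' x).ne').mul (hφC.pow 2)
    · exact hφ2c.mul_left
  have hi2 : Integrable (fun x => A2 x * (2 * φ x * deriv φ x)) := by
    apply (hA2C.mul ((continuous_const.mul hφC).mul hφ'C)).integrable_of_hasCompactSupport
    exact (hφc.mul_left.mul_right).mul_left
  have hi5 : Integrable (fun x => lam⁻¹ * (deriv a x * deriv φ x ^ 2)) := by
    apply Continuous.integrable_of_hasCompactSupport
    · exact continuous_const.mul (haC.mul (hφ'C.pow 2))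
    · apply HasCompactSupport.mul_left
      apply HasCompactSupport.mul_left
      simpa [sq, Pi.mul_def] using (hφc.deriv.mul_left (f := deriv φ))
  -- split the LHS
  have hsplit : (∫ x : ℝ, (A3 x - lam * A2 x ^ 2 / deriv a x) * φ x ^ 2)
      = (∫ x : ℝ, A3 x * φ x ^ 2) - ∫ x : ℝ, lam * A2 x ^ 2 / deriv a x * φ x ^ 2 := by
    rw [← integral_sub hi3 hi4]
    congr 1; funext x; ring
  rw [hsplit, hparts]
  have hmono : (∫ x : ℝ, (- (A2 x * (2 * φ x * deriv φ x)) - lam * A2 x ^ 2 / deriv a x * φ x ^ 2))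
      ≤ ∫ x : ℝ, lam⁻¹ * (deriv a x * deriv φ x ^ 2) := by
    apply integral_mono (hi2.neg.sub hi4) hi5
    intro x
    have hp := ha' x
    have hkey : 0 ≤ (lam * A2 x * φ x + deriv a x * deriv φ x) ^ 2 / (lam * deriv a x) :=
      div_nonneg (sq_nonneg _) (mul_pos hlam hp).le
    have hid : lam⁻¹ * (deriv a x * deriv φ x ^ 2) + A2 x * (2 * φ x * deriv φ x)
        + lam * A2 x ^ 2 / deriv a x * φ x ^ 2
        = (lam * A2 x * φ x + deriv a x * deriv φ x) ^ 2 / (lam * deriv a x) := by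
      field_simp
      ring
    simp only [Pi.sub_apply, Pi.neg_apply]
    linarith
  have e1 : (∫ x : ℝ, (- (A2 x * (2 * φ x * deriv φ x)) - lam * A2 x ^ 2 / deriv a x * φ x ^ 2))
      = (- ∫ x : ℝ, A2 x * (2 * φ x * deriv φ x)) - ∫ x : ℝ, lam * A2 x ^ 2 / deriv a x * φ x ^ 2 := by
    have h := integral_sub hi2.neg hi4
    simpa [integral_neg] using h
  have e2 : (∫ x : ℝ, lam⁻¹ * (deriv a x * deriv φ x ^ 2))
      = lam⁻¹ * ∫ x : ℝ, deriv a x * deriv φ x ^ 2 := integral_const_mul _ _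
  linarith
end

section
/- There is R ≥ r0 such that g00 < 0 on [R,∞), and there are constants C_k' such that on [R,∞) one has |f(r) − 1| ≤ C_0' r^{-1} and |∂_r^k f(r)| ≤ C_k' r^{-1-k} for every k ≥ 1. Consequently any antiderivative r* of f on [R,∞) satisfies ∂_r r* = 1 + O(r^{-1}), ∂_r^k r* = O(r^{-k}) for every k ≥ 2, and r*(r) → ∞ as r → ∞. (These are the asymptotics of the Regge–Wheeler coordinate in the asymptotically flat region.) -/
open Filter

noncomputable section

/-- The function `f(r) = −|h(r)|^{1/2}/g00(r) = |h|^{-1/2}(g^{rr})^{-1}`, where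
`|h| = g0r² − g00·grr`; this is `dr*/dr` for the Regge–Wheeler coordinate `r*`. -/
def fRW (g00 g0r grr : ℝ → ℝ) (r : ℝ) : ℝ :=
  -Real.sqrt (g0r r ^ 2 - g00 r * grr r) / g00 r

/-- Auxiliary: a uniform bound for finitely many reals. -/
lemma exists_bound_forall_le (M : ℕ → ℝ) (k : ℕ) : ∃ C : ℝ, 1 ≤ C ∧ ∀ i ≤ k, M i ≤ C := by
  induction k with
  | zero => exact ⟨max (M 0) 1, le_max_right _ _,
      fun i hi => by interval_cases i; exact le_max_left _ _⟩
  | succ n ih =>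
    obtain ⟨C, h1, hC⟩ := ih
    refine ⟨max C (M (n + 1)), le_trans h1 (le_max_left _ _), fun i hi => ?_⟩
    rcases Nat.le_succ_iff.mp hi with h | h
    · exact le_trans (hC i h) (le_max_left _ _)
    · rw [h]; exact le_max_right _ _

/-- Symbol class of order `-1` on `(B, ∞)`: all derivatives of order `k`
decay like `r^{-1-k}`. -/
def SymOn (B : ℝ) (u : ℝ → ℝ) : Prop :=
  ContDiffOn ℝ (⊤ : ℕ∞) u (Set.Ioi B) ∧
    ∀ k : ℕ, ∃ C : ℝ, 0 ≤ C ∧ ∀ r : ℝ, B < r →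
      ‖iteratedFDerivWithin ℝ k u (Set.Ioi B) r‖ ≤ C / r ^ (1 + k)

lemma SymOn.add {B : ℝ} {u v : ℝ → ℝ} (hu : SymOn B u) (hv : SymOn B v) :
    SymOn B (fun r => u r + v r) := by
  refine ⟨hu.1.add hv.1, fun k => ?_⟩
  obtain ⟨C, hC0, hC⟩ := hu.2 k
  obtain ⟨D, hD0, hD⟩ := hv.2 k
  refine ⟨C + D, by positivity, fun r hr => ?_⟩
  rw [iteratedFDerivWithin_add_apply' ((hu.1 r hr).of_le (by exact_mod_cast le_top)) ((hv.1 r hr).of_le (by exact_mod_cast le_top))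
    isOpen_Ioi.uniqueDiffOn hr, add_div]
  exact le_trans (norm_add_le _ _) (add_le_add (hC r hr) (hD r hr))

lemma SymOn.neg {B : ℝ} {u : ℝ → ℝ} (hu : SymOn B u) : SymOn B (fun r => -u r) := by
  refine ⟨hu.1.neg, fun k => ?_⟩
  obtain ⟨C, hC0, hC⟩ := hu.2 k
  refine ⟨C, hC0, fun r hr => ?_⟩
  rw [show (fun r => -u r) = -u from rfl,
    iteratedFDerivWithin_neg_apply isOpen_Ioi.uniqueDiffOn hr, norm_neg]
  exact hC r hr

lemma SymOn.mul {B : ℝ} (hB : 1 ≤ B) {u v : ℝ → ℝ} (hu : SymOn B u) (hv : SymOn B v) :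
    SymOn B (fun r => u r * v r) := by
  refine ⟨hu.1.mul hv.1, fun k => ?_⟩
  choose Cu hCu0 hCu using hu.2
  choose Cv hCv0 hCv using hv.2
  obtain ⟨A, hA1, hAle⟩ := exists_bound_forall_le (fun i => max (Cu i) (Cv i)) k
  refine ⟨2 ^ k * (A * A), by positivity, fun r hr => ?_⟩
  have hr1 : (1:ℝ) ≤ r := le_of_lt (lt_of_le_of_lt hB hr)
  have hr0 : (0:ℝ) < r := lt_of_lt_of_le zero_lt_one hr1
  have key : ‖iteratedFDerivWithin ℝ k (fun y => u y * v y) (Set.Ioi B) r‖ ≤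
      ∑ i ∈ Finset.range (k + 1), (k.choose i : ℝ) *
        ‖iteratedFDerivWithin ℝ i u (Set.Ioi B) r‖ *
        ‖iteratedFDerivWithin ℝ (k - i) v (Set.Ioi B) r‖ :=
    norm_iteratedFDerivWithin_mul_le hu.1 hv.1 isOpen_Ioi.uniqueDiffOn hr (by exact_mod_cast le_top)
  refine le_trans key (le_trans
    (Finset.sum_le_sum (g := fun i => (k.choose i : ℝ) * (A * A) / r ^ (2 + k))
      (fun i hi => ?_)) ?_)
  · have hik : i ≤ k := Nat.lt_succ_iff.mp (Finset.mem_range.mp hi)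
    have h1 : ‖iteratedFDerivWithin ℝ i u (Set.Ioi B) r‖ ≤ A / r ^ (1 + i) :=
      le_trans (hCu i r hr) (by gcongr; exact le_trans (le_max_left _ _) (hAle i hik))
    have h2 : ‖iteratedFDerivWithin ℝ (k - i) v (Set.Ioi B) r‖ ≤ A / r ^ (1 + (k - i)) :=
      le_trans (hCv (k - i) r hr)
        (by gcongr; exact le_trans (le_max_right _ _) (hAle (k - i) (Nat.sub_le _ _)))
    have hA0 : (0:ℝ) ≤ A := le_trans zero_le_one hA1
    calc (k.choose i : ℝ) * ‖iteratedFDerivWithin ℝ i u (Set.Ioi B) r‖ *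
          ‖iteratedFDerivWithin ℝ (k - i) v (Set.Ioi B) r‖
        ≤ (k.choose i : ℝ) * (A / r ^ (1 + i)) * (A / r ^ (1 + (k - i))) := by
          gcongr
      _ = (k.choose i : ℝ) * (A * A) / (r ^ (1 + i) * r ^ (1 + (k - i))) := by ring
      _ = (k.choose i : ℝ) * (A * A) / r ^ (2 + k) := by
          rw [← pow_add]
          congr 2
          omega
  · rw [← Finset.sum_div, ← Finset.sum_mul, ← Nat.cast_sum, Nat.sum_range_choose]
    have h2 : r ^ (1 + k) ≤ r ^ (2 + k) := pow_le_pow_right₀ hr1 (by omega)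
    have hA0 : (0:ℝ) ≤ A := le_trans zero_le_one hA1
    push_cast
    exact div_le_div_of_nonneg_left (by positivity : (0:ℝ) ≤ 2 ^ k * (A * A))
      (by positivity : (0:ℝ) < r ^ (1 + k)) h2

lemma SymOn.comp {B : ℝ} (hB : 1 ≤ B) {v : ℝ → ℝ} (hv : SymOn B v)
    {φ : ℝ → ℝ} {ε : ℝ} (hε : 0 < ε)
    (hφ : ContDiffOn ℝ (⊤ : ℕ∞) φ (Metric.ball 0 (3 * ε)))
    (hφ0 : φ 0 = 0)
    (hmaps : ∀ r : ℝ, B < r → |v r| ≤ ε) :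
    SymOn B (fun r => φ (v r)) := by
  have htsub : Metric.ball (0:ℝ) (2 * ε) ⊆ Metric.ball 0 (3 * ε) :=
    Metric.ball_subset_ball (by linarith)
  have hmaps' : Set.MapsTo v (Set.Ioi B) (Metric.ball (0:ℝ) (2 * ε)) := by
    intro r hr
    have := hmaps r hr
    simp only [Metric.mem_ball, Real.dist_eq, sub_zero]
    linarith
  have hφt : ContDiffOn ℝ (⊤ : ℕ∞) φ (Metric.ball (0:ℝ) (2 * ε)) := hφ.mono htsub
  have hM : ∀ i : ℕ, ∃ Mi : ℝ, 0 ≤ Mi ∧ ∀ y ∈ Metric.ball (0:ℝ) (2 * ε),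
      ‖iteratedFDerivWithin ℝ i φ (Metric.ball 0 (2 * ε)) y‖ ≤ Mi := by
    intro i
    obtain ⟨Mi, hMi⟩ := (isCompact_closedBall (0:ℝ) (2 * ε)).exists_bound_of_continuousOn
      ((hφ.continuousOn_iteratedFDerivWithin (by exact_mod_cast le_top) Metric.isOpen_ball.uniqueDiffOn).mono
        (Metric.closedBall_subset_ball (by linarith)))
    refine ⟨max Mi 0, le_max_right _ _, fun y hy => ?_⟩
    rw [iteratedFDerivWithin_of_isOpen i Metric.isOpen_ball hy,
      ← iteratedFDerivWithin_of_isOpen i Metric.isOpen_ball (htsub hy)]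
    exact le_trans (hMi y (Metric.ball_subset_closedBall hy)) (le_max_left _ _)
  choose M hM0 hMb using hM
  constructor
  · exact hφt.comp hv.1 hmaps'
  · intro k
    rcases Nat.eq_zero_or_pos k with rfl | hk1
    · obtain ⟨C0, hC00, hC0⟩ := hv.2 0
      refine ⟨M 1 * C0, mul_nonneg (hM0 1) hC00, fun r hr => ?_⟩
      have hr0 : (0:ℝ) < r := lt_of_lt_of_le zero_lt_one (le_of_lt (lt_of_le_of_lt hB hr))
      have hd : ∀ y ∈ Metric.ball (0:ℝ) (2 * ε),
          ‖derivWithin φ (Metric.ball (0:ℝ) (2 * ε)) y‖ ≤ M 1 := by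
        intro y hy
        rw [derivWithin_of_isOpen Metric.isOpen_ball hy]
        have h1 : ‖deriv φ y‖ = ‖iteratedFDeriv ℝ 1 φ y‖ := by
          rw [norm_iteratedFDeriv_eq_norm_iteratedDeriv, iteratedDeriv_one]
        rw [h1, ← iteratedFDerivWithin_of_isOpen 1 Metric.isOpen_ball hy]
        exact hMb 1 y hy
      have hmem : v r ∈ Metric.ball (0:ℝ) (2 * ε) := hmaps' hr
      have h0mem : (0:ℝ) ∈ Metric.ball (0:ℝ) (2 * ε) := Metric.mem_ball_self (by linarith)
      have hlip := Convex.norm_image_sub_le_of_norm_derivWithin_le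
        (hφt.differentiableOn (by simp)) hd (convex_ball 0 (2 * ε)) h0mem hmem
      rw [norm_iteratedFDerivWithin_zero]
      have hv0 : ‖v r‖ ≤ C0 / r ^ (1 + 0) := by
        have := hC0 r hr
        rwa [norm_iteratedFDerivWithin_zero] at this
      calc ‖φ (v r)‖ = ‖φ (v r) - φ 0‖ := by rw [hφ0, sub_zero]
        _ ≤ M 1 * ‖v r - 0‖ := hlip
        _ = M 1 * ‖v r‖ := by rw [sub_zero]
        _ ≤ M 1 * (C0 / r ^ (1 + 0)) := by gcongr; exact hM0 1
        _ = M 1 * C0 / r ^ (1 + 0) := by ring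
    · choose Cv hCv0 hCv using hv.2
      obtain ⟨A, hA1, hAle⟩ := exists_bound_forall_le (fun i => max (Cv i) (M i)) k
      have hA0 : (0:ℝ) ≤ A := le_trans zero_le_one hA1
      refine ⟨(Nat.factorial k : ℝ) * A * A ^ k, by positivity, fun r hr => ?_⟩
      have hr1 : (1:ℝ) ≤ r := le_of_lt (lt_of_le_of_lt hB hr)
      have hr0 : (0:ℝ) < r := lt_of_lt_of_le zero_lt_one hr1
      have hk0 : (k:ℝ) ≠ 0 := Nat.cast_ne_zero.mpr (by omega)
      have hkpos : (0:ℝ) < k := Nat.cast_pos.mpr hk1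
      set e : ℝ := -(1 + k) / k with he
      set D : ℝ := A * r ^ e with hD
      have hrpow_pos : ∀ x : ℝ, (0:ℝ) < r ^ x := fun x => Real.rpow_pos_of_pos hr0 x
      have hDpow : ∀ i : ℕ, D ^ i = A ^ i * r ^ (e * i) := by
        intro i
        rw [hD, mul_pow, ← Real.rpow_natCast (r ^ e) i, ← Real.rpow_mul hr0.le]
      have hC : ∀ i, i ≤ k →
          ‖iteratedFDerivWithin ℝ i φ (Metric.ball (0:ℝ) (2 * ε)) (v r)‖ ≤ A := fun i hik =>
        le_trans (hMb i (v r) (hmaps' hr)) (le_trans (le_max_right _ _) (hAle i hik))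
      have hDbd : ∀ i, 1 ≤ i → i ≤ k →
          ‖iteratedFDerivWithin ℝ i v (Set.Ioi B) r‖ ≤ D ^ i := by
        intro i hi1 hik
        have h1 : ‖iteratedFDerivWithin ℝ i v (Set.Ioi B) r‖ ≤ Cv i / r ^ (1 + i) := hCv i r hr
        have h2 : Cv i / r ^ (1 + i) = Cv i * r ^ (-(1 + (i:ℝ))) := by
          rw [Real.rpow_neg hr0.le, div_eq_mul_inv]
          congr 2
          rw [← Real.rpow_natCast r (1 + i)]
          push_cast
          ring_nf
        have h3 : Cv i ≤ A ^ i := by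
          refine le_trans (le_trans (le_max_left _ _) (hAle i hik)) ?_
          exact le_self_pow₀ hA1 (by omega)
        have h4 : r ^ (-(1 + (i:ℝ))) ≤ r ^ (e * i) := by
          apply Real.rpow_le_rpow_of_exponent_le hr1
          rw [he, div_mul_eq_mul_div, le_div_iff₀ hkpos]
          have hik' : (i:ℝ) ≤ k := Nat.cast_le.mpr hik
          nlinarith
        calc ‖iteratedFDerivWithin ℝ i v (Set.Ioi B) r‖ ≤ Cv i * r ^ (-(1 + (i:ℝ))) := by
              rw [← h2]; exact h1
          _ ≤ A ^ i * r ^ (e * i) := by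
              apply mul_le_mul h3 h4 (le_of_lt (hrpow_pos _)) (by positivity)
          _ = D ^ i := (hDpow i).symm
      have key := norm_iteratedFDerivWithin_comp_le hφt hv.1 ((by exact_mod_cast le_top) : (k : WithTop ℕ∞) ≤ ((⊤ : ℕ∞) : WithTop ℕ∞))
        Metric.isOpen_ball.uniqueDiffOn isOpen_Ioi.uniqueDiffOn hmaps' hr hC hDbd
      have hcomp : (fun r => φ (v r)) = φ ∘ v := rfl
      rw [hcomp]
      refine le_trans key ?_
      rw [hDpow k]
      have hek : e * k = -(1 + (k:ℝ)) := by
        rw [he]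
        field_simp
      rw [hek]
      have hpw : r ^ (-(1 + (k:ℝ))) = (r ^ (1 + k))⁻¹ := by
        rw [Real.rpow_neg hr0.le]
        congr 1
        rw [← Real.rpow_natCast r (1 + k)]
        push_cast
        ring_nf
      rw [hpw, div_eq_mul_inv]
      ring_nf
      exact le_rfl

lemma iteratedDeriv_add_const'' (k : ℕ) (hk : 1 ≤ k) (w : ℝ → ℝ) (c : ℝ) :
    iteratedDeriv k (fun r => w r + c) = iteratedDeriv k w := by
  obtain ⟨m, rfl⟩ : ∃ m, k = m + 1 := ⟨k - 1, by omega⟩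
  have hder : deriv (fun r => w r + c) = deriv w :=
    funext fun x => deriv_add_const (𝕜 := ℝ) (F := ℝ) (f := w) (x := x) c
  rw [iteratedDeriv_succ', iteratedDeriv_succ', hder]

lemma symOn_base {B r0 : ℝ} (hr0 : 0 < r0) (hrB : r0 ≤ B) (w : ℝ → ℝ) (c : ℝ)
    (hw : ContDiff ℝ (⊤ : ℕ∞) w)
    (h0 : ∃ C, ∀ r, r0 ≤ r → |w r + c| ≤ C / r)
    (hk : ∀ k : ℕ, 1 ≤ k → ∃ C, ∀ r, r0 ≤ r → |iteratedDeriv k w r| ≤ C / r ^ (1 + k)) :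
    SymOn B (fun r => w r + c) := by
  constructor
  · exact (hw.add contDiff_const).contDiffOn
  · intro k
    have hrle : ∀ r : ℝ, B < r → r0 ≤ r ∧ 0 < r := fun r hr =>
      ⟨le_trans hrB hr.le, lt_of_lt_of_le hr0 (le_trans hrB hr.le)⟩
    rcases Nat.eq_zero_or_pos k with rfl | hk1
    · obtain ⟨C, hC⟩ := h0
      refine ⟨max C 0, le_max_right _ _, fun r hr => ?_⟩
      obtain ⟨hr1, hr2⟩ := hrle r hr
      rw [norm_iteratedFDerivWithin_zero]
      calc ‖w r + c‖ ≤ C / r := hC r hr1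
        _ ≤ max C 0 / r ^ (1 + 0) := by
            rw [pow_one]
            gcongr
            exact le_max_left _ _
    · obtain ⟨C, hC⟩ := hk k hk1
      refine ⟨max C 0, le_max_right _ _, fun r hr => ?_⟩
      obtain ⟨hr1, hr2⟩ := hrle r hr
      rw [iteratedFDerivWithin_of_isOpen k isOpen_Ioi hr,
        norm_iteratedFDeriv_eq_norm_iteratedDeriv, iteratedDeriv_add_const'' k hk1 w c,
        Real.norm_eq_abs]
      calc |iteratedDeriv k w r| ≤ C / r ^ (1 + k) := hC r hr1
        _ ≤ max C 0 / r ^ (1 + k) := by gcongr; exact le_max_left _ _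

/-- asymptotics of the Regge–Wheeler coordinate in the asymptotically
flat region.  Under stationary asymptotic flatness of `g00, g0r, grr` on `[r0,∞)`,
there is `R ≥ r0` with `g00 < 0` on `[R,∞)`, and constants `C_k'` such that
`|f − 1| ≤ C_0'/r` and `|∂_r^k f| ≤ C_k' r^{−1−k}` for `k ≥ 1` on `[R,∞)`.
Consequently any antiderivative `r*` of `f` on `[R,∞)` satisfies
`∂_r r* = 1 + O(r^{-1})`, `∂_r^k r* = O(r^{-k})` for `k ≥ 2`, and `r*(r) → ∞` as `r → ∞`. -/
theorem regge_wheeler_flat_asymptotics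
    (r0 : ℝ) (hr0 : 0 < r0)
    (g00 g0r grr : ℝ → ℝ)
    (hg00 : ContDiff ℝ (⊤ : ℕ∞) g00) (hg0r : ContDiff ℝ (⊤ : ℕ∞) g0r) (hgrr : ContDiff ℝ (⊤ : ℕ∞) grr)
    (hb0 : ∃ C, ∀ r, r0 ≤ r → |g00 r + 1| + |g0r r| + |grr r - 1| ≤ C / r)
    (hbk : ∀ k : ℕ, 1 ≤ k → ∃ C, ∀ r, r0 ≤ r →
        |iteratedDeriv k g00 r| + |iteratedDeriv k g0r r| + |iteratedDeriv k grr r|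
          ≤ C / r ^ (1 + k)) :
    ∃ R : ℝ, r0 ≤ R ∧ (∀ r, R ≤ r → g00 r < 0) ∧
      (∃ C0 : ℝ, ∀ r, R ≤ r → |fRW g00 g0r grr r - 1| ≤ C0 / r) ∧
      (∀ k : ℕ, 1 ≤ k → ∃ Ck : ℝ, ∀ r, R ≤ r →
          |iteratedDeriv k (fRW g00 g0r grr) r| ≤ Ck / r ^ (1 + k)) ∧
      (∀ rs : ℝ → ℝ, (∀ r, R ≤ r → HasDerivAt rs (fRW g00 g0r grr r) r) →
        (∃ C : ℝ, ∀ r, R ≤ r → |deriv rs r - 1| ≤ C / r) ∧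
        (∀ k : ℕ, 2 ≤ k → ∃ C : ℝ, ∀ r, R ≤ r → |iteratedDeriv k rs r| ≤ C / r ^ k) ∧
        Tendsto rs atTop atTop) := by
  obtain ⟨C0, hC0⟩ := hb0
  set C1 : ℝ := max C0 1 with hC1def
  have hC11 : 1 ≤ C1 := le_max_right _ _
  set B : ℝ := max (max r0 1) (32 * C1) with hBdef
  have hB1 : 1 ≤ B := le_trans (le_max_right r0 1) (le_max_left _ _)
  have hBr0 : r0 ≤ B := le_trans (le_max_left r0 1) (le_max_left _ _)
  have hB32 : 32 * C1 ≤ B := le_max_right _ _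
  have hsmall : ∀ r : ℝ, B < r →
      |g00 r + 1| ≤ 1/32 ∧ |g0r r| ≤ 1/32 ∧ |grr r - 1| ≤ 1/32 := by
    intro r hr
    have hrr0 : r0 ≤ r := le_trans hBr0 hr.le
    have hrpos : (0:ℝ) < r := lt_of_lt_of_le (lt_of_lt_of_le zero_lt_one hB1) hr.le
    have h := hC0 r hrr0
    have hC1r : C1 / r ≤ 1/32 := by
      rw [div_le_iff₀ hrpos]
      linarith
    have hCC : C0 / r ≤ 1/32 := by
      refine le_trans ?_ hC1r
      gcongr
      exact le_max_left _ _
    refine ⟨?_, ?_, ?_⟩ <;>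
      [skip; skip; skip] <;>
      · refine le_trans ?_ hCC
        linarith [abs_nonneg (g00 r + 1), abs_nonneg (g0r r), abs_nonneg (grr r - 1)]
  have hsym_a : SymOn B (fun r => g00 r + 1) := by
    apply symOn_base hr0 hBr0 g00 1 hg00
    · exact ⟨C0, fun r hrr => by
        have h := hC0 r hrr
        linarith [abs_nonneg (g0r r), abs_nonneg (grr r - 1)]⟩
    · intro k hk
      obtain ⟨C, hC⟩ := hbk k hk
      exact ⟨C, fun r hrr => by
        have h := hC r hrr
        linarith [abs_nonneg (iteratedDeriv k g0r r), abs_nonneg (iteratedDeriv k grr r)]⟩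
  have hsym_b : SymOn B g0r := by
    have h : SymOn B (fun r => g0r r + 0) := by
      apply symOn_base hr0 hBr0 g0r 0 hg0r
      · exact ⟨C0, fun r hrr => by
          have h := hC0 r hrr
          rw [add_zero]
          linarith [abs_nonneg (g00 r + 1), abs_nonneg (grr r - 1)]⟩
      · intro k hk
        obtain ⟨C, hC⟩ := hbk k hk
        exact ⟨C, fun r hrr => by
          have h := hC r hrr
          linarith [abs_nonneg (iteratedDeriv k g00 r), abs_nonneg (iteratedDeriv k grr r)]⟩
    have e : (fun r => g0r r + 0) = g0r := funext fun r => add_zero _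
    rwa [e] at h
  have hsym_c : SymOn B (fun r => grr r + (-1)) := by
    apply symOn_base hr0 hBr0 grr (-1) hgrr
    · exact ⟨C0, fun r hrr => by
        have h := hC0 r hrr
        rw [← sub_eq_add_neg]
        linarith [abs_nonneg (g00 r + 1), abs_nonneg (g0r r)]⟩
    · intro k hk
      obtain ⟨C, hC⟩ := hbk k hk
      exact ⟨C, fun r hrr => by
        have h := hC r hrr
        linarith [abs_nonneg (iteratedDeriv k g00 r), abs_nonneg (iteratedDeriv k g0r r)]⟩
  have hsym_u : SymOn B (fun r =>
      g0r r * g0r r + -((g00 r + 1) * (grr r + -1)) + -(g00 r + 1) + (grr r + -1)) :=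
    (((hsym_b.mul hB1 hsym_b).add (hsym_a.mul hB1 hsym_c).neg).add hsym_a.neg).add hsym_c
  have hmaps_u : ∀ r, B < r →
      |g0r r * g0r r + -((g00 r + 1) * (grr r + -1)) + -(g00 r + 1) + (grr r + -1)|
        ≤ 1/4 := by
    intro r hr
    obtain ⟨h1, h2, h3⟩ := hsmall r hr
    obtain ⟨e11, e12⟩ := abs_le.mp h1
    obtain ⟨e21, e22⟩ := abs_le.mp h2
    obtain ⟨e31, e32⟩ := abs_le.mp h3
    have hb2 : g0r r * g0r r ≤ 1/1024 := by nlinarith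
    have hb2' : 0 ≤ g0r r * g0r r := mul_self_nonneg _
    have hac : (g00 r + 1) * (grr r - 1) ≤ 1/1024 := by nlinarith
    have hac' : -(1/1024) ≤ (g00 r + 1) * (grr r - 1) := by nlinarith
    rw [abs_le]
    constructor <;> nlinarith
  have hmaps_a : ∀ r, B < r → |g00 r + 1| ≤ 1/4 :=
    fun r hr => le_trans (hsmall r hr).1 (by norm_num)
  have hq : (0:ℝ) < 1/4 := by norm_num
  have hsq : ContDiffOn ℝ (⊤ : ℕ∞) (fun y : ℝ => Real.sqrt (1 + y) - 1)
      (Metric.ball 0 (3 * (1/4 : ℝ))) := by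
    intro y hy
    have hy' : |y| < 3/4 := by
      have := Metric.mem_ball.mp hy
      rw [Real.dist_eq, sub_zero] at this
      linarith
    have h1 : (1 : ℝ) + y ≠ 0 := by
      have := abs_lt.mp hy'
      intro h
      linarith [this.1]
    exact (((Real.contDiffAt_sqrt h1).comp y (contDiffAt_const.add contDiffAt_id)).sub
      contDiffAt_const).contDiffWithinAt
  have hψ : ContDiffOn ℝ (⊤ : ℕ∞) (fun y : ℝ => -(y - 1)⁻¹ - 1)
      (Metric.ball 0 (3 * (1/4 : ℝ))) := by
    intro y hy
    have hy' : |y| < 3/4 := by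
      have := Metric.mem_ball.mp hy
      rw [Real.dist_eq, sub_zero] at this
      linarith
    have h1 : y - 1 ≠ 0 := by
      have := abs_lt.mp hy'
      intro h
      have : y = 1 := by linarith [sub_eq_zero.mp h]
      linarith [(abs_lt.mp hy').2]
    exact ((((contDiffAt_id.sub contDiffAt_const).inv h1).neg).sub
      contDiffAt_const).contDiffWithinAt
  have hsqs : SymOn B (fun r => Real.sqrt (1 + (g0r r * g0r r +
      -((g00 r + 1) * (grr r + -1)) + -(g00 r + 1) + (grr r + -1))) - 1) :=
    hsym_u.comp hB1 hq hsq (by simp) hmaps_u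
  have hψs : SymOn B (fun r => -((g00 r + 1) - 1)⁻¹ - 1) :=
    hsym_a.comp hB1 hq hψ (by norm_num) hmaps_a
  have hFsym : SymOn B (fun r => fRW g00 g0r grr r - 1) := by
    have h := ((hsqs.mul hB1 hψs).add hsqs).add hψs
    have heq : (fun r => (Real.sqrt (1 + (g0r r * g0r r +
        -((g00 r + 1) * (grr r + -1)) + -(g00 r + 1) + (grr r + -1))) - 1) *
          (-((g00 r + 1) - 1)⁻¹ - 1) +
        (Real.sqrt (1 + (g0r r * g0r r +
        -((g00 r + 1) * (grr r + -1)) + -(g00 r + 1) + (grr r + -1))) - 1) +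
        (-((g00 r + 1) - 1)⁻¹ - 1)) = (fun r => fRW g00 g0r grr r - 1) := by
      funext r
      have h1 : 1 + (g0r r * g0r r + -((g00 r + 1) * (grr r + -1)) + -(g00 r + 1) +
          (grr r + -1)) = g0r r ^ 2 - g00 r * grr r := by ring
      have h2 : g00 r + 1 - 1 = g00 r := by ring
      rw [h1, h2]
      simp only [fRW]
      rw [neg_div, div_eq_mul_inv]
      ring
    rwa [heq] at h
  have hBpos : (0:ℝ) < B := lt_of_lt_of_le zero_lt_one hB1
  refine ⟨B + 1, by linarith, ?_, ?_, ?_, ?_⟩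
  · -- g00 < 0
    intro r hr
    have h := (hsmall r (by linarith)).1
    obtain ⟨h1, h2⟩ := abs_le.mp h
    linarith
  · -- |f - 1| ≤ C / r
    obtain ⟨C, hCnn, hC⟩ := hFsym.2 0
    refine ⟨C, fun r hr => ?_⟩
    have hBr : B < r := by linarith
    have h := hC r hBr
    rw [norm_iteratedFDerivWithin_zero, Real.norm_eq_abs] at h
    simpa using h
  · -- |∂^k f| ≤ C / r^{1+k}
    intro k hk
    obtain ⟨C, hCnn, hC⟩ := hFsym.2 k
    refine ⟨C, fun r hr => ?_⟩
    have hBr : B < r := by linarith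
    have h := hC r hBr
    rw [iteratedFDerivWithin_of_isOpen k isOpen_Ioi hBr,
      norm_iteratedFDeriv_eq_norm_iteratedDeriv, Real.norm_eq_abs] at h
    have heq2 : iteratedDeriv k (fun r => fRW g00 g0r grr r - 1) =
        iteratedDeriv k (fRW g00 g0r grr) := by
      have e : (fun r => fRW g00 g0r grr r - 1) =
          (fun r => fRW g00 g0r grr r + (-1)) := funext fun r => sub_eq_add_neg _ _
      rw [e, iteratedDeriv_add_const'' k hk]
    rwa [heq2] at h
  · -- the antiderivative part
    intro rs hrs
    have hder : ∀ r, B + 1 ≤ r → deriv rs r = fRW g00 g0r grr r :=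
      fun r hr => (hrs r hr).deriv
    refine ⟨?_, ?_, ?_⟩
    · -- deriv rs = 1 + O(1/r)
      obtain ⟨C, hCnn, hC⟩ := hFsym.2 0
      refine ⟨C, fun r hr => ?_⟩
      have hBr : B < r := by linarith
      have h := hC r hBr
      rw [norm_iteratedFDerivWithin_zero, Real.norm_eq_abs] at h
      rw [hder r hr]
      simpa using h
    · -- higher derivatives of rs
      intro k hk
      obtain ⟨m, rfl⟩ : ∃ m, k = m + 1 := ⟨k - 1, by omega⟩
      have hm1 : 1 ≤ m := by omega
      obtain ⟨C, hCnn, hC⟩ := hFsym.2 m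
      refine ⟨max C (|iteratedDeriv (m+1) rs (B+1)| * (B+1) ^ (m+1)), fun r hr => ?_⟩
      rcases eq_or_lt_of_le hr with heq | hrlt
      · -- the single boundary point r = B + 1
        subst heq
        have hpow : (0:ℝ) < (B+1) ^ (m+1) := by positivity
        rw [le_div_iff₀ hpow]
        exact le_max_right _ _
      · -- interior points
        have hBr : B < r := by linarith
        have hrpos : (0:ℝ) < r := by linarith
        have hnb : deriv rs =ᶠ[nhds r] fRW g00 g0r grr := by
          have hmem : Set.Ioi (B+1) ∈ nhds r := isOpen_Ioi.mem_nhds hrlt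
          filter_upwards [hmem] with x hx
          exact hder x (le_of_lt hx)
        have h1 : iteratedDeriv (m+1) rs r = iteratedDeriv m (fRW g00 g0r grr) r := by
          rw [iteratedDeriv_succ']
          exact hnb.iteratedDeriv_eq m
        have h := hC r hBr
        rw [iteratedFDerivWithin_of_isOpen m isOpen_Ioi hBr,
          norm_iteratedFDeriv_eq_norm_iteratedDeriv, Real.norm_eq_abs] at h
        have heq2 : iteratedDeriv m (fun r => fRW g00 g0r grr r - 1) =
            iteratedDeriv m (fRW g00 g0r grr) := by
          have e : (fun r => fRW g00 g0r grr r - 1) =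
              (fun r => fRW g00 g0r grr r + (-1)) := funext fun r => sub_eq_add_neg _ _
          rw [e, iteratedDeriv_add_const'' m hm1]
        rw [heq2] at h
        rw [h1]
        refine le_trans h ?_
        rw [show 1 + m = m + 1 from by omega]
        gcongr
        exact le_max_left _ _
    · -- rs tends to infinity
      obtain ⟨C, hCnn, hC⟩ := hFsym.2 0
      set a : ℝ := max (B + 1) (2 * C + 1) with ha
      have haR : B + 1 ≤ a := le_max_left _ _
      have haC : 2 * C + 1 ≤ a := le_max_right _ _
      have hhalf : ∀ r, a ≤ r → 1/2 ≤ fRW g00 g0r grr r := by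
        intro r hr
        have hBr : B < r := by linarith
        have hrpos : (0:ℝ) < r := by linarith
        have h := hC r hBr
        rw [norm_iteratedFDerivWithin_zero, Real.norm_eq_abs] at h
        have h' : |fRW g00 g0r grr r - 1| ≤ C / r := by simpa using h
        have h2 : C / r ≤ 1/2 := by
          rw [div_le_iff₀ hrpos]
          linarith
        have := abs_le.mp (le_trans h' h2)
        linarith [this.1]
      have hg : ∀ x, a ≤ x → HasDerivAt (fun y => rs y - y/2)
          (fRW g00 g0r grr x - 1/2) x := by
        intro x hx
        exact (hrs x (le_trans haR hx)).sub ((hasDerivAt_id x).div_const 2)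
      have hmono : MonotoneOn (fun y => rs y - y/2) (Set.Ici a) := by
        apply monotoneOn_of_deriv_nonneg (convex_Ici a)
        · intro x hx
          exact ((hg x hx).continuousAt).continuousWithinAt
        · intro x hx
          rw [interior_Ici] at hx
          exact ((hg x (le_of_lt hx)).differentiableAt).differentiableWithinAt
        · intro x hx
          rw [interior_Ici] at hx
          rw [(hg x (le_of_lt hx)).deriv]
          have := hhalf x (le_of_lt hx)
          linarith
      have hbase : Tendsto (fun r : ℝ => r/2 + (rs a - a/2)) atTop atTop :=
        tendsto_atTop_add_const_right _ _ (tendsto_id.atTop_div_const (by norm_num))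
      refine tendsto_atTop_mono' atTop ?_ hbase
      filter_upwards [eventually_ge_atTop a] with r hr
      have := hmono Set.self_mem_Ici (Set.mem_Ici.mpr hr) hr
      simp only [] at this
      linarith

end
end
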